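/- Retraction error bound, orthographic case: let L ∈ ℝ^{n₁×n₂} have rank r with thin SVD L = UΣVᵀ, and let X lie in the tangent space T_L (i.e., X = UUᵀX + XVVᵀ − UUᵀXVVᵀ) with spectral norm ‖X‖ < σ_r(L). Then Uᵀ(L+X)V is invertible, and the orthographic retraction R⁽²⁾_L(X) = (L+X)V[Uᵀ(L+X)V]⁻¹Uᵀ(L+X) satisfies ‖R⁽²⁾_L(X) − (L + X)‖_F ≤ ‖X‖_F² / (2(σ_r(L) − ‖X‖)). -/

import Mathlib

open Matrix MeasureTheory ProbabilityTheory Filter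
open scoped BigOperators ENNReal NNReal

noncomputable section

namespace RPCA

variable {n₁ n₂ r : ℕ}

/-- Frobenius norm of a real matrix. -/
def frob (A : Matrix (Fin n₁) (Fin n₂) ℝ) : ℝ :=
  Real.sqrt (∑ i, ∑ j, (A i j) ^ 2)

/-- Frobenius inner product of two real matrices. -/
def finner (A B : Matrix (Fin n₁) (Fin n₂) ℝ) : ℝ :=
  ∑ i, ∑ j, A i j * B i j

/-- Spectral norm (operator norm) of a real matrix. -/
def spec (A : Matrix (Fin n₁) (Fin n₂) ℝ) : ℝ :=
  sSup {c | ∃ v : Fin n₂ → ℝ, (∑ j, (v j) ^ 2) = 1 ∧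
    c = Real.sqrt (∑ i, (∑ j, A i j * v j) ^ 2)}

/-- Smallest singular value of a square matrix. -/
def sigmaMin (A : Matrix (Fin r) (Fin r) ℝ) : ℝ :=
  sInf {c | ∃ v : Fin r → ℝ, (∑ k, (v k) ^ 2) = 1 ∧
    c = Real.sqrt (∑ i, (∑ k, A i k * v k) ^ 2)}

/-- The γ-th percentile (counting the fraction γ from the largest) of a multiset of reals. -/
def percentile (γ : ℝ) (s : Multiset ℝ) : ℝ :=
  (s.sort (· ≤ ·)).getD (s.card - ⌈γ * s.card⌉₊) 0

/-- Absolute values of the entries of row `i`. -/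
def rowAbs (A : Matrix (Fin n₁) (Fin n₂) ℝ) (i : Fin n₁) : Multiset ℝ :=
  (Finset.univ : Finset (Fin n₂)).val.map fun j => |A i j|

/-- Absolute values of the entries of column `j`. -/
def colAbs (A : Matrix (Fin n₁) (Fin n₂) ℝ) (j : Fin n₂) : Multiset ℝ :=
  (Finset.univ : Finset (Fin n₁)).val.map fun i => |A i j|

/-- The hard-thresholding operator `F_γ`: entries that are simultaneously above the γ-th
percentile of absolute values of their row and of their column are set to zero. -/
def hardThresh (γ : ℝ) (A : Matrix (Fin n₁) (Fin n₂) ℝ) : Matrix (Fin n₁) (Fin n₂) ℝ :=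
  Matrix.of fun i j =>
    if percentile γ (rowAbs A i) < |A i j| ∧ percentile γ (colAbs A j) < |A i j| then 0
    else A i j

/-- Absolute values of the observed entries of row `i`. -/
def rowAbsObs (Φ : Finset (Fin n₁ × Fin n₂)) (A : Matrix (Fin n₁) (Fin n₂) ℝ) (i : Fin n₁) :
    Multiset ℝ :=
  ((Φ.filter fun q => q.1 = i).val).map fun q => |A q.1 q.2|

/-- Absolute values of the observed entries of column `j`. -/
def colAbsObs (Φ : Finset (Fin n₁ × Fin n₂)) (A : Matrix (Fin n₁) (Fin n₂) ℝ) (j : Fin n₂) :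
    Multiset ℝ :=
  ((Φ.filter fun q => q.2 = j).val).map fun q => |A q.1 q.2|

/-- Partially observed thresholding operator `F̃_γ`: `F̃_ij A = A i j` if `|A i j|` exceeds the
γ-th percentile of absolute values of observed entries in both its row and its column,
and `0` otherwise. -/
def hardThreshObs (γ : ℝ) (Φ : Finset (Fin n₁ × Fin n₂)) (A : Matrix (Fin n₁) (Fin n₂) ℝ) :
    Matrix (Fin n₁) (Fin n₂) ℝ :=
  Matrix.of fun i j =>
    if percentile γ (rowAbsObs Φ A i) < |A i j| ∧ percentile γ (colAbsObs Φ A j) < |A i j| then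
      A i j
    else 0

/-- `P_Φ`: zero out the entries outside the observed set `Φ`. -/
def projObs (Φ : Finset (Fin n₁ × Fin n₂)) (A : Matrix (Fin n₁) (Fin n₂) ℝ) :
    Matrix (Fin n₁) (Fin n₂) ℝ :=
  Matrix.of fun i j => if (i, j) ∈ Φ then A i j else 0

/-- The sparsity class `S_{γ*}`: at most `γ* n₂` nonzero entries in each row and at most
`γ* n₁` nonzero entries in each column. -/
def SparseSet (γs : ℝ) (A : Matrix (Fin n₁) (Fin n₂) ℝ) : Prop :=
  (∀ i, (((Finset.univ : Finset (Fin n₂)).filter fun j => A i j ≠ 0).card : ℝ) ≤ γs * n₂) ∧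
  (∀ j, (((Finset.univ : Finset (Fin n₁)).filter fun i => A i j ≠ 0).card : ℝ) ≤ γs * n₁)

/-- Thin SVD `L = U (diagonal s) Vᵀ` with orthonormal `U, V` and positive decreasing
singular values `s`; this encodes that `L` has rank exactly `r`. -/
def IsThinSVD (L : Matrix (Fin n₁) (Fin n₂) ℝ) (U : Matrix (Fin n₁) (Fin r) ℝ)
    (s : Fin r → ℝ) (V : Matrix (Fin n₂) (Fin r) ℝ) : Prop :=
  Uᵀ * U = 1 ∧ Vᵀ * V = 1 ∧ Antitone s ∧ (∀ k, 0 < s k) ∧ L = U * Matrix.diagonal s * Vᵀ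

/-- μ-incoherence of the orthonormal SVD factors `U, V`: every row of `U` has Euclidean norm
at most `√(μ r / n₁)` and every row of `V` has Euclidean norm at most `√(μ r / n₂)`. -/
def Incoherent (μc : ℝ) (U : Matrix (Fin n₁) (Fin r) ℝ) (V : Matrix (Fin n₂) (Fin r) ℝ) :
    Prop :=
  (∀ i, Real.sqrt (∑ k, (U i k) ^ 2) ≤ Real.sqrt (μc * r / n₁)) ∧
  (∀ j, Real.sqrt (∑ k, (V j k) ^ 2) ≤ Real.sqrt (μc * r / n₂))

/-- Tangent-space projection `P_{T_X} D = UUᵀD + DVVᵀ − UUᵀDVVᵀ` at a rank-r point with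
orthonormal factors `U, V`. -/
def tangentProj (U : Matrix (Fin n₁) (Fin r) ℝ) (V : Matrix (Fin n₂) (Fin r) ℝ)
    (D : Matrix (Fin n₁) (Fin n₂) ℝ) : Matrix (Fin n₁) (Fin n₂) ℝ :=
  U * Uᵀ * D + D * (V * Vᵀ) - U * Uᵀ * D * (V * Vᵀ)

/-- `Z` is a best rank-r approximation of `M` in Frobenius norm. -/
def IsBestRankApprox (r : ℕ) (M Z : Matrix (Fin n₁) (Fin n₂) ℝ) : Prop :=
  Z.rank ≤ r ∧ ∀ W : Matrix (Fin n₁) (Fin n₂) ℝ, W.rank ≤ r → frob (M - Z) ≤ frob (M - W)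

/-- Orthographic retraction formula `M V (Uᵀ M V)⁻¹ Uᵀ M` where `M = X + δ`. -/
def orthoRetract (U : Matrix (Fin n₁) (Fin r) ℝ) (V : Matrix (Fin n₂) (Fin r) ℝ)
    (M : Matrix (Fin n₁) (Fin n₂) ℝ) : Matrix (Fin n₁) (Fin n₂) ℝ :=
  M * V * (Uᵀ * M * V)⁻¹ * (Uᵀ * M)

/-- `Lnext` is obtained from `Lk` by applying either the projective or the orthographic
retraction (for the rank-r manifold) to the tangent vector `δ` at `Lk`. -/
def IsRetractUpdate (r : ℕ) (Lk δ Lnext : Matrix (Fin n₁) (Fin n₂) ℝ) : Prop :=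
  IsBestRankApprox r (Lk + δ) Lnext ∨
  ∃ (U : Matrix (Fin n₁) (Fin r) ℝ) (s : Fin r → ℝ) (V : Matrix (Fin n₂) (Fin r) ℝ),
    IsThinSVD Lk U s V ∧ Lnext = orthoRetract U V (Lk + δ)

/-- One step of manifold gradient descent with the fully observed thresholded gradient:
`Lnext = R_{Lk}(−η P_{T_{Lk}} F_γ(Lk − Y))`. -/
def IsGradStep (γ η : ℝ) (r : ℕ) (Y Lk Lnext : Matrix (Fin n₁) (Fin n₂) ℝ) : Prop :=
  ∃ (U : Matrix (Fin n₁) (Fin r) ℝ) (s : Fin r → ℝ) (V : Matrix (Fin n₂) (Fin r) ℝ),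
    IsThinSVD Lk U s V ∧
    IsRetractUpdate r Lk (-(η • tangentProj U V (hardThresh γ (Lk - Y)))) Lnext

/-- One step of manifold gradient descent with the partially observed thresholded gradient:
`Lnext = R_{Lk}(−η P_{T_{Lk}} F̃_γ(Lk − Y))`. -/
def IsGradStepObs (γ η : ℝ) (r : ℕ) (Φ : Finset (Fin n₁ × Fin n₂))
    (Y Lk Lnext : Matrix (Fin n₁) (Fin n₂) ℝ) : Prop :=
  ∃ (U : Matrix (Fin n₁) (Fin r) ℝ) (s : Fin r → ℝ) (V : Matrix (Fin n₂) (Fin r) ℝ),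
    IsThinSVD Lk U s V ∧
    IsRetractUpdate r Lk (-(η • tangentProj U V (hardThreshObs γ Φ (Lk - Y)))) Lnext

end RPCA

/-!
Write `P = UUᵀ`, `Q = VVᵀ` and `M = L + X`. Since `M` lies in the tangent space,
`(1 - P) M (1 - Q) = 0`, and expanding the retraction with `A = UᵀMV` leaves only
`R(X) - M = (1 - P) X · V A⁻¹ Uᵀ · X (1 - Q)`.
Now `A = Σ + UᵀXV` is a perturbation of `Σ` by an operator of norm at most `‖X‖ < σ_r`, so
`‖A⁻¹‖ ≤ 1 / (σ_r - ‖X‖)`; and `(1 - P) X = (1 - P) X Q` and `X (1 - Q)` are orthogonal pieces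
of `X`, so the product of their Frobenius norms is at most `‖X‖_F² / 2`.
-/

namespace RPCA

open WithLp

variable {k m n p : ℕ}

section Frobenius

lemma frob_nonneg (A : Matrix (Fin m) (Fin n) ℝ) : 0 ≤ frob A := Real.sqrt_nonneg _

lemma frob_sq (A : Matrix (Fin m) (Fin n) ℝ) : frob A ^ 2 = ∑ i, ∑ j, A i j ^ 2 :=
  Real.sq_sqrt (by positivity)

lemma frob_sq_eq_trace (A : Matrix (Fin m) (Fin n) ℝ) : frob A ^ 2 = trace (A * Aᵀ) := by
  rw [frob_sq]
  simp [trace, mul_apply, sq]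

lemma frob_transpose (A : Matrix (Fin m) (Fin n) ℝ) : frob Aᵀ = frob A := by
  unfold frob
  rw [Finset.sum_comm]
  rfl

lemma frob_add_sq_of_mul_transpose_eq_zero {A B : Matrix (Fin m) (Fin n) ℝ} (h : A * Bᵀ = 0) :
    frob (A + B) ^ 2 = frob A ^ 2 + frob B ^ 2 := by
  have h' : B * Aᵀ = 0 := by simpa using congrArg transpose h
  simp only [frob_sq_eq_trace, transpose_add, Matrix.add_mul, Matrix.mul_add, h, h', trace_add,
    trace_zero]
  ring

lemma frob_add_sq_of_transpose_mul_eq_zero {A B : Matrix (Fin m) (Fin n) ℝ} (h : Aᵀ * B = 0) :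
    frob (A + B) ^ 2 = frob A ^ 2 + frob B ^ 2 := by
  rw [← frob_transpose, transpose_add,
    frob_add_sq_of_mul_transpose_eq_zero (by rwa [transpose_transpose]), frob_transpose,
    frob_transpose]

lemma frob_sq_eq_sum_norm_sq_col (A : Matrix (Fin m) (Fin n) ℝ) :
    frob A ^ 2 = ∑ j, ‖toLp 2 fun i => A i j‖ ^ 2 := by
  simp only [frob_sq, EuclideanSpace.norm_sq_eq, Real.norm_eq_abs, sq_abs]
  exact Finset.sum_comm

open scoped Matrix.Norms.Frobenius in
lemma frob_eq_frobenius_norm (A : Matrix (Fin m) (Fin n) ℝ) : frob A = ‖A‖ := by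
  simp [frob, frobenius_norm_def, Real.sqrt_eq_rpow]

open scoped Matrix.Norms.Frobenius in
lemma frob_mul_le (A : Matrix (Fin k) (Fin m) ℝ) (B : Matrix (Fin m) (Fin n) ℝ) :
    frob (A * B) ≤ frob A * frob B := by
  simpa only [frob_eq_frobenius_norm] using frobenius_norm_mul A B

end Frobenius

section TangentSpace

variable {U : Matrix (Fin m) (Fin k) ℝ} {V : Matrix (Fin n) (Fin k) ℝ}

lemma tangentProj_add (A B : Matrix (Fin m) (Fin n) ℝ) :
    tangentProj U V (A + B) = tangentProj U V A + tangentProj U V B := by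
  simp only [tangentProj, Matrix.mul_add, Matrix.add_mul]
  abel

lemma tangentProj_eq_self_iff {X : Matrix (Fin m) (Fin n) ℝ} :
    tangentProj U V X = X ↔ (X - U * Uᵀ * X) * (V * Vᵀ) = X - U * Uᵀ * X := by
  have h : tangentProj U V X - X = (X - U * Uᵀ * X) * (V * Vᵀ) - (X - U * Uᵀ * X) := by
    simp only [tangentProj, Matrix.sub_mul]
    abel
  rw [← sub_eq_zero, h, sub_eq_zero]

lemma frob_sq_add_frob_sq_le_of_tangentProj_eq (hU : Uᵀ * U = 1) (hV : Vᵀ * V = 1)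
    {X : Matrix (Fin m) (Fin n) ℝ} (hX : tangentProj U V X = X) :
    frob (X - U * Uᵀ * X) ^ 2 + frob (X - X * (V * Vᵀ)) ^ 2 ≤ frob X ^ 2 := by
  have hUc {l} (Y : Matrix (Fin k) (Fin l) ℝ) : Uᵀ * (U * Y) = Y := by
    rw [← Matrix.mul_assoc, hU, Matrix.one_mul]
  have hVc {l} (Y : Matrix (Fin k) (Fin l) ℝ) : Vᵀ * (V * Y) = Y := by
    rw [← Matrix.mul_assoc, hV, Matrix.one_mul]
  have hcols : frob X ^ 2 = frob (X * (V * Vᵀ)) ^ 2 + frob (X - X * (V * Vᵀ)) ^ 2 := by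
    rw [← frob_add_sq_of_mul_transpose_eq_zero, add_sub_cancel]
    simp only [transpose_sub, transpose_mul, transpose_transpose, Matrix.mul_sub,
      Matrix.mul_assoc, hVc, sub_self]
  have hrows : frob (X * (V * Vᵀ)) ^ 2
      = frob (U * Uᵀ * X * (V * Vᵀ)) ^ 2 + frob (X - U * Uᵀ * X) ^ 2 := by
    rw [← frob_add_sq_of_transpose_mul_eq_zero, ← tangentProj_eq_self_iff.mp hX, Matrix.sub_mul,
      add_sub_cancel]
    simp only [transpose_mul, transpose_transpose, Matrix.mul_sub, Matrix.mul_assoc, hUc,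
      sub_self]
  nlinarith [sq_nonneg (frob (U * Uᵀ * X * (V * Vᵀ)))]

lemma orthoRetract_sub_self {M : Matrix (Fin m) (Fin n) ℝ} (hM : tangentProj U V M = M)
    (hA : IsUnit (Uᵀ * M * V)) :
    orthoRetract U V M - M
      = (M - U * Uᵀ * M) * (V * (Uᵀ * M * V)⁻¹ * Uᵀ) * (M - M * (V * Vᵀ)) := by
  set A := Uᵀ * M * V
  have hdet := (isUnit_iff_isUnit_det A).mp hA
  have hGA {l} (Y : Matrix (Fin k) (Fin l) ℝ) : A⁻¹ * (A * Y) = Y := by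
    rw [← Matrix.mul_assoc, nonsing_inv_mul _ hdet, Matrix.one_mul]
  have hAG {l} (Y : Matrix (Fin k) (Fin l) ℝ) : A * (A⁻¹ * Y) = Y := by
    rw [← Matrix.mul_assoc, mul_nonsing_inv _ hdet, Matrix.one_mul]
  have hleft : (M - U * Uᵀ * M) * V = M * V - U * A := by
    simp only [A, Matrix.sub_mul, Matrix.mul_assoc]
  have hright : Uᵀ * (M - M * (V * Vᵀ)) = Uᵀ * M - A * Vᵀ := by
    simp only [A, Matrix.mul_sub, Matrix.mul_assoc]
  symm
  calc (M - U * Uᵀ * M) * (V * A⁻¹ * Uᵀ) * (M - M * (V * Vᵀ))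
      = (M * V - U * A) * (A⁻¹ * (Uᵀ * M - A * Vᵀ)) := by
        rw [← hleft, ← hright]
        simp only [Matrix.mul_assoc]
    _ = M * V * A⁻¹ * (Uᵀ * M) - (U * Uᵀ * M + M * (V * Vᵀ) - U * Uᵀ * M * (V * Vᵀ)) := by
        have hUAV : U * (A * Vᵀ) = U * (Uᵀ * (M * (V * Vᵀ))) := by
          simp only [A, Matrix.mul_assoc]
        simp only [Matrix.sub_mul, Matrix.mul_sub, Matrix.mul_assoc, hGA, hAG, hUAV]
        abel
    _ = orthoRetract U V M - M := by
        rw [← tangentProj, hM]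
        rfl

end TangentSpace

namespace IsThinSVD

variable {L : Matrix (Fin m) (Fin n) ℝ} {U : Matrix (Fin m) (Fin k) ℝ} {s : Fin k → ℝ}
  {V : Matrix (Fin n) (Fin k) ℝ}

lemma mul_transpose_mul_self (h : IsThinSVD L U s V) : U * Uᵀ * L = L := by
  obtain ⟨hU, -, -, -, rfl⟩ := h
  rw [Matrix.mul_assoc U Uᵀ, ← Matrix.mul_assoc Uᵀ, ← Matrix.mul_assoc Uᵀ, hU, Matrix.one_mul,
    Matrix.mul_assoc]

lemma mul_mul_transpose_self (h : IsThinSVD L U s V) : L * (V * Vᵀ) = L := by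
  obtain ⟨-, hV, -, -, rfl⟩ := h
  rw [← Matrix.mul_assoc, Matrix.mul_assoc _ Vᵀ, hV, Matrix.mul_one]

lemma transpose_mul_mul (h : IsThinSVD L U s V) : Uᵀ * L * V = diagonal s := by
  obtain ⟨hU, hV, -, -, rfl⟩ := h
  simp only [← Matrix.mul_assoc, hU, Matrix.one_mul]
  rw [Matrix.mul_assoc, hV, Matrix.mul_one]

lemma tangentProj_eq (h : IsThinSVD L U s V) : tangentProj U V L = L := by
  rw [tangentProj, h.mul_transpose_mul_self, h.mul_mul_transpose_self, add_sub_cancel_right]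

lemma orthoRetract_add_sub (h : IsThinSVD L U s V) {X : Matrix (Fin m) (Fin n) ℝ}
    (hX : tangentProj U V X = X) (hA : IsUnit (Uᵀ * (L + X) * V)) :
    orthoRetract U V (L + X) - (L + X)
      = (X - U * Uᵀ * X) * (V * (Uᵀ * (L + X) * V)⁻¹ * Uᵀ) * (X - X * (V * Vᵀ)) := by
  have hM : tangentProj U V (L + X) = L + X := by
    rw [tangentProj_add, h.tangentProj_eq, hX]
  have hleft : L + X - U * Uᵀ * (L + X) = X - U * Uᵀ * X := by
    rw [Matrix.mul_add, h.mul_transpose_mul_self]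
    abel
  have hright : L + X - (L + X) * (V * Vᵀ) = X - X * (V * Vᵀ) := by
    rw [Matrix.add_mul, h.mul_mul_transpose_self]
    abel
  rw [orthoRetract_sub_self hM hA, hleft, hright]

end IsThinSVD

section OperatorNorm

open scoped Matrix.Norms.L2Operator

lemma l2_opNorm_transpose (A : Matrix (Fin m) (Fin n) ℝ) : ‖Aᵀ‖ = ‖A‖ := by
  simpa only [conjTranspose_eq_transpose_of_trivial] using l2_opNorm_conjTranspose A

lemma l2_opNorm_le_one_of_transpose_mul_self {U : Matrix (Fin m) (Fin n) ℝ} (hU : Uᵀ * U = 1) :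
    ‖U‖ ≤ 1 := by
  have h := l2_opNorm_conjTranspose_mul_self U
  rw [conjTranspose_eq_transpose_of_trivial, hU] at h
  have h1 : ‖(1 : Matrix (Fin n) (Fin n) ℝ)‖ ≤ 1 := by
    rw [cstar_norm_def, map_one]
    exact ContinuousLinearMap.norm_id_le
  nlinarith [norm_nonneg U]

lemma norm_toLp_eq_sqrt (v : Fin n → ℝ) : ‖toLp 2 v‖ = √(∑ j, v j ^ 2) := by
  simp [EuclideanSpace.norm_eq]

lemma norm_toLp_mulVec_le (A : Matrix (Fin m) (Fin n) ℝ) (v : Fin n → ℝ) :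
    ‖toLp 2 (A *ᵥ v)‖ ≤ ‖A‖ * ‖toLp 2 v‖ :=
  l2_opNorm_mulVec A (toLp 2 v)

lemma spec_eq_sSup (A : Matrix (Fin m) (Fin n) ℝ) :
    spec A = sSup {c | ∃ v : Fin n → ℝ, ‖toLp 2 v‖ = 1 ∧ c = ‖toLp 2 (A *ᵥ v)‖} := by
  simp only [spec, norm_toLp_eq_sqrt, Real.sqrt_eq_one, mulVec, dotProduct]

lemma norm_toLp_mulVec_le_spec_mul (A : Matrix (Fin m) (Fin n) ℝ) (v : Fin n → ℝ) :
    ‖toLp 2 (A *ᵥ v)‖ ≤ spec A * ‖toLp 2 v‖ := by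
  rcases eq_or_ne v 0 with rfl | hv
  · simp
  have hv' : 0 < ‖toLp 2 v‖ := by simpa using hv
  have hbdd : BddAbove {c | ∃ v : Fin n → ℝ, ‖toLp 2 v‖ = 1 ∧ c = ‖toLp 2 (A *ᵥ v)‖} := by
    refine ⟨‖A‖, ?_⟩
    rintro c ⟨w, hw, rfl⟩
    simpa [hw] using norm_toLp_mulVec_le A w
  have hle : ‖toLp 2 v‖⁻¹ * ‖toLp 2 (A *ᵥ v)‖ ≤ spec A := by
    rw [spec_eq_sSup]
    refine le_csSup hbdd ⟨‖toLp 2 v‖⁻¹ • v, by simp [norm_smul, hv'.ne'], ?_⟩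
    simp [mulVec_smul, norm_smul]
  rwa [inv_mul_le_iff₀ hv', mul_comm] at hle

lemma spec_nonneg (A : Matrix (Fin m) (Fin n) ℝ) : 0 ≤ spec A :=
  Real.sSup_nonneg fun _ ⟨_, _, hc⟩ => hc ▸ Real.sqrt_nonneg _

lemma l2_opNorm_le_spec (A : Matrix (Fin m) (Fin n) ℝ) : ‖A‖ ≤ spec A :=
  ContinuousLinearMap.opNorm_le_bound _ (spec_nonneg A) fun x =>
    norm_toLp_mulVec_le_spec_mul A x.ofLp

lemma mul_norm_le_norm_diagonal_mulVec {s : Fin n → ℝ} {σ : ℝ} (hσ : 0 ≤ σ)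
    (hs : ∀ k, σ ≤ s k) (v : Fin n → ℝ) :
    σ * ‖toLp 2 v‖ ≤ ‖toLp 2 (diagonal s *ᵥ v)‖ := by
  rw [norm_toLp_eq_sqrt, norm_toLp_eq_sqrt, ← Real.sqrt_sq hσ, ← Real.sqrt_mul (sq_nonneg σ),
    Finset.mul_sum]
  gcongr with k
  rw [mulVec_diagonal, mul_pow]
  gcongr
  exact hs k

lemma isUnit_and_l2_opNorm_inv_le {A : Matrix (Fin n) (Fin n) ℝ} {c : ℝ} (hc : 0 < c)
    (hA : ∀ v, c * ‖toLp 2 v‖ ≤ ‖toLp 2 (A *ᵥ v)‖) : IsUnit A ∧ ‖A⁻¹‖ ≤ c⁻¹ := by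
  have hunit : IsUnit A := by
    rw [isUnit_iff_isUnit_det, isUnit_iff_ne_zero]
    intro hdet
    obtain ⟨v, hv, hAv⟩ := exists_mulVec_eq_zero_iff.mpr hdet
    have hv' : 0 < ‖toLp 2 v‖ := by simpa using hv
    have := hA v
    rw [hAv, toLp_zero, norm_zero] at this
    exact (mul_pos hc hv').not_ge this
  refine ⟨hunit, ContinuousLinearMap.opNorm_le_bound _ (inv_nonneg.mpr hc.le) fun x => ?_⟩
  change ‖toLp 2 (A⁻¹ *ᵥ x.ofLp)‖ ≤ c⁻¹ * ‖x‖
  have h := hA (A⁻¹ *ᵥ x.ofLp)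
  rwa [mulVec_mulVec, mul_nonsing_inv _ ((isUnit_iff_isUnit_det A).mp hunit), one_mulVec,
    toLp_ofLp, ← le_inv_mul_iff₀ hc] at h

lemma isUnit_diagonal_add_and_l2_opNorm_inv_le {s : Fin n → ℝ} {σ : ℝ} (hs : ∀ k, σ ≤ s k)
    {E : Matrix (Fin n) (Fin n) ℝ} (hE : ‖E‖ < σ) :
    IsUnit (diagonal s + E) ∧ ‖(diagonal s + E)⁻¹‖ ≤ (σ - ‖E‖)⁻¹ := by
  refine isUnit_and_l2_opNorm_inv_le (sub_pos.mpr hE) fun v => ?_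
  have hD := mul_norm_le_norm_diagonal_mulVec ((norm_nonneg E).trans hE.le) hs v
  have hEv := norm_toLp_mulVec_le E v
  have htri := norm_sub_le (toLp 2 ((diagonal s + E) *ᵥ v)) (toLp 2 (E *ᵥ v))
  rw [← toLp_sub, add_mulVec, add_sub_cancel_right] at htri
  rw [add_mulVec]
  nlinarith [norm_nonneg (toLp 2 v)]

lemma frob_mul_le_l2_opNorm_mul (A : Matrix (Fin k) (Fin m) ℝ) (B : Matrix (Fin m) (Fin n) ℝ) :
    frob (A * B) ≤ ‖A‖ * frob B := by
  have hAB : frob (A * B) ^ 2 ≤ (‖A‖ * frob B) ^ 2 := by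
    rw [frob_sq_eq_sum_norm_sq_col, mul_pow, frob_sq_eq_sum_norm_sq_col, Finset.mul_sum]
    gcongr with j
    rw [← mul_pow]
    exact pow_le_pow_left₀ (norm_nonneg _) (norm_toLp_mulVec_le A fun i => B i j) 2
  exact (pow_le_pow_iff_left₀ (frob_nonneg _)
    (mul_nonneg (norm_nonneg _) (frob_nonneg _)) two_ne_zero).mp hAB

lemma l2_opNorm_mul_mul_le {A : Matrix (Fin k) (Fin m) ℝ} {B : Matrix (Fin n) (Fin p) ℝ}
    (hA : ‖A‖ ≤ 1) (hB : ‖B‖ ≤ 1) (Y : Matrix (Fin m) (Fin n) ℝ) : ‖A * Y * B‖ ≤ ‖Y‖ :=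
  calc ‖A * Y * B‖ ≤ ‖A‖ * ‖Y‖ * ‖B‖ :=
        (l2_opNorm_mul _ _).trans (by gcongr; exact l2_opNorm_mul _ _)
    _ ≤ 1 * ‖Y‖ * 1 := by gcongr
    _ = ‖Y‖ := by ring

lemma frob_mul_mul_le (A : Matrix (Fin k) (Fin m) ℝ) (W : Matrix (Fin m) (Fin n) ℝ)
    (B : Matrix (Fin n) (Fin p) ℝ) : frob (A * W * B) ≤ frob A * ‖W‖ * frob B := by
  rw [Matrix.mul_assoc, mul_assoc]
  exact (frob_mul_le _ _).trans (by gcongr; exacts [frob_nonneg _, frob_mul_le_l2_opNorm_mul _ _])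

lemma IsThinSVD.isUnit_and_l2_opNorm_mul_inv_mul_le {L X : Matrix (Fin m) (Fin n) ℝ}
    {U : Matrix (Fin m) (Fin k) ℝ} {s : Fin k → ℝ} {V : Matrix (Fin n) (Fin k) ℝ}
    (h : IsThinSVD L U s V) {σ : ℝ} (hσ : ∀ i, σ ≤ s i) (hX : spec X < σ) :
    IsUnit (Uᵀ * (L + X) * V) ∧ ‖V * (Uᵀ * (L + X) * V)⁻¹ * Uᵀ‖ ≤ (σ - spec X)⁻¹ := by
  have hU : ‖Uᵀ‖ ≤ 1 := l2_opNorm_transpose U ▸ l2_opNorm_le_one_of_transpose_mul_self h.1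
  have hV : ‖V‖ ≤ 1 := l2_opNorm_le_one_of_transpose_mul_self h.2.1
  have hA : Uᵀ * (L + X) * V = diagonal s + Uᵀ * X * V := by
    rw [Matrix.mul_add, Matrix.add_mul, h.transpose_mul_mul]
  have hE : ‖Uᵀ * X * V‖ ≤ spec X := (l2_opNorm_mul_mul_le hU hV X).trans (l2_opNorm_le_spec X)
  obtain ⟨hunit, hinv⟩ := isUnit_diagonal_add_and_l2_opNorm_inv_le hσ (hE.trans_lt hX)
  rw [← hA] at hunit hinv
  refine ⟨hunit, (l2_opNorm_mul_mul_le hV hU _).trans (hinv.trans ?_)⟩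
  exact inv_anti₀ (sub_pos.mpr hX) (by linarith)

end OperatorNorm

end RPCA

/-- retraction error bound, orthographic case. -/
theorem orthographic_retraction_bound
    {n₁ n₂ r : ℕ} (hr : 0 < r)
    (L X : Matrix (Fin n₁) (Fin n₂) ℝ)
    (U : Matrix (Fin n₁) (Fin r) ℝ) (s : Fin r → ℝ) (V : Matrix (Fin n₂) (Fin r) ℝ)
    (hSVD : RPCA.IsThinSVD L U s V)
    (hTan : X = RPCA.tangentProj U V X)
    (hXnorm : RPCA.spec X < s ⟨r - 1, Nat.sub_lt hr Nat.one_pos⟩) :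
    IsUnit (Uᵀ * (L + X) * V) ∧
    RPCA.frob (RPCA.orthoRetract U V (L + X) - (L + X)) ≤
      RPCA.frob X ^ 2 /
        (2 * (s ⟨r - 1, Nat.sub_lt hr Nat.one_pos⟩ - RPCA.spec X)) := by
  open scoped Matrix.Norms.L2Operator in
  set σ := s ⟨r - 1, Nat.sub_lt hr Nat.one_pos⟩
  have hσ : ∀ k, σ ≤ s k := fun k => hSVD.2.2.1 (Nat.le_sub_one_of_lt k.isLt)
  obtain ⟨hunit, hW⟩ := hSVD.isUnit_and_l2_opNorm_mul_inv_mul_le hσ hXnorm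
  refine ⟨hunit, ?_⟩
  rw [hSVD.orthoRetract_add_sub hTan.symm hunit]
  have hpyth := RPCA.frob_sq_add_frob_sq_le_of_tangentProj_eq hSVD.1 hSVD.2.1 hTan.symm
  have hc : 0 < σ - RPCA.spec X := sub_pos.mpr hXnorm
  set a := RPCA.frob (X - U * Uᵀ * X)
  set b := RPCA.frob (X - X * (V * Vᵀ))
  calc RPCA.frob ((X - U * Uᵀ * X) * (V * (Uᵀ * (L + X) * V)⁻¹ * Uᵀ) * (X - X * (V * Vᵀ)))
      ≤ a * ‖V * (Uᵀ * (L + X) * V)⁻¹ * Uᵀ‖ * b := RPCA.frob_mul_mul_le _ _ _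
    _ ≤ a * (σ - RPCA.spec X)⁻¹ * b := by
        gcongr
        exacts [RPCA.frob_nonneg _, RPCA.frob_nonneg _]
    _ = a * b / (σ - RPCA.spec X) := by ring
    _ ≤ RPCA.frob X ^ 2 / (2 * (σ - RPCA.spec X)) := by
        rw [← div_div, div_le_div_iff_of_pos_right hc]
        nlinarith [sq_nonneg (a - b), hpyth]
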